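/- For each d ≥ 1, every d-dimensional obstruction to purity has exactly d+2 vertices; that is, if K is a d-dimensional simplicial complex on more than d+2 vertices all of whose proper induced subcomplexes are pure, then K itself is pure. -/

import Mathlib

open Finset

variable {V : Type*} [DecidableEq V]

/-- A (finite abstract) simplicial complex: a finset of finsets closed under subsets. -/
def IsComplex (K : Finset (Finset V)) : Prop :=
  ∀ F ∈ K, ∀ G ⊆ F, G ∈ K

/-- The facets (maximal faces) of a complex. -/
def facets (K : Finset (Finset V)) : Finset (Finset V) := by
  classical exact K.filter (fun F => ∀ G ∈ K, F ⊆ G → F = G)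

/-- `L` is a shelling order of the facets of `K`: for each `i ≥ 2` (0-indexed `i ≥ 1`),
the intersection of the closed simplex on `F_i` with the union of the previous closed simplices
is pure of dimension `dim F_i - 1`: every face `G` of the intersection is contained in a face `H`
of the intersection with `H.card = F_i.card - 1`. -/
def IsShelling (K : Finset (Finset V)) (L : List (Finset V)) : Prop :=
  L.Nodup ∧ L.toFinset = facets K ∧
  ∀ i : Fin L.length, i.1 ≠ 0 → ∀ G ⊆ L.get i,
    (∃ j : Fin L.length, j < i ∧ G ⊆ L.get j) →
    ∃ H, G ⊆ H ∧ H ⊆ L.get i ∧ H.card + 1 = (L.get i).card ∧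
      ∃ j : Fin L.length, j < i ∧ H ⊆ L.get j

/-- A complex is shellable if it admits a shelling order of its facets. -/
def Shellable (K : Finset (Finset V)) : Prop := ∃ L, IsShelling K L

/-- The subcomplex of `K` induced by a vertex subset `U`. -/
def inducedSub (K : Finset (Finset V)) (U : Finset V) : Finset (Finset V) :=
  K.filter (fun F => F ⊆ U)

/-- The vertex set of a complex. -/
def verts (K : Finset (Finset V)) : Finset V := K.sup id

/-- The link of a vertex `v` in `K`. -/
def link (K : Finset (Finset V)) (v : V) : Finset (Finset V) :=
  K.filter (fun F => v ∉ F ∧ insert v F ∈ K)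

/-- A complex is pure if all of its facets have the same dimension. -/
def IsPure (K : Finset (Finset V)) : Prop :=
  ∀ F ∈ facets K, ∀ G ∈ facets K, F.card = G.card

/-!
Let `G` be a facet with fewer than `d + 1` vertices and `F₀` a `d`-face. Pick `x ∈ G \ F₀`.
In the pure complex induced on the other vertices, `F₀` is a facet, so the facet `H ⊇ G \ {x}`
there is a `d`-face, hence a facet of `K`. Deleting any vertex `y ∉ H ∪ {x}` would leave both `G`
and `H` as facets of a pure induced subcomplex, which is impossible; so all vertices lie in
`H ∪ {x}`, and there are at most `d + 2` of them.
-/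

variable {K : Finset (Finset V)}

lemma mem_facets {F : Finset V} : F ∈ facets K ↔ F ∈ K ∧ ∀ G ∈ K, F ⊆ G → F = G := by
  simp [facets]

lemma subset_verts {F : Finset V} (hF : F ∈ K) : F ⊆ verts K :=
  le_sup (f := id) hF

lemma subset_verts_erase {F : Finset V} {x : V} (hF : F ∈ K) (hx : x ∉ F) :
    F ⊆ (verts K).erase x :=
  subset_erase.2 ⟨subset_verts hF, hx⟩

lemma exists_mem_facets_superset {F : Finset V} (hF : F ∈ K) : ∃ H ∈ facets K, F ⊆ H := by
  have hne : (K.filter (F ⊆ ·)).Nonempty := ⟨F, mem_filter.2 ⟨hF, subset_rfl⟩⟩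
  obtain ⟨H, hH, hmax⟩ := exists_max_image _ card hne
  rw [mem_filter] at hH
  refine ⟨H, mem_facets.2 ⟨hH.1, fun G hG hHG => ?_⟩, hH.2⟩
  exact eq_of_subset_of_card_le hHG (hmax G (mem_filter.2 ⟨hG, hH.2.trans hHG⟩))

lemma mem_facets_of_card_eq {n : ℕ} (hbound : ∀ F ∈ K, F.card ≤ n) {F : Finset V}
    (hF : F ∈ K) (hcard : F.card = n) : F ∈ facets K :=
  mem_facets.2 ⟨hF, fun G hG hFG => eq_of_subset_of_card_le hFG (hcard ▸ hbound G hG)⟩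

lemma mem_facets_inducedSub {U F : Finset V} (hF : F ∈ facets K) (hFU : F ⊆ U) :
    F ∈ facets (inducedSub K U) := by
  rw [mem_facets] at hF ⊢
  exact ⟨mem_filter.2 ⟨hF.1, hFU⟩, fun G hG => hF.2 G (mem_filter.1 hG).1⟩

section ProperInducedPure

variable (hind : ∀ U ⊂ verts K, IsPure (inducedSub K U))
include hind

lemma card_eq_of_mem_facets_of_notMem {A B : Finset V} {x : V} (hA : A ∈ facets K)
    (hB : B ∈ facets K) (hx : x ∈ verts K) (hxA : x ∉ A) (hxB : x ∉ B) : A.card = B.card :=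
  hind _ (erase_ssubset hx) A
    (mem_facets_inducedSub hA (subset_verts_erase (mem_facets.1 hA).1 hxA)) B
    (mem_facets_inducedSub hB (subset_verts_erase (mem_facets.1 hB).1 hxB))

lemma verts_subset_insert {G H : Finset V} {x : V} (hG : G ∈ facets K) (hH : H ∈ facets K)
    (hcard : G.card ≠ H.card) (hGH : G.erase x ⊆ H) : verts K ⊆ insert x H := by
  intro y hy
  by_contra hyxH
  obtain ⟨hyx, hyH⟩ := not_or.1 (mem_insert.not.1 hyxH)
  have hyG : y ∉ G := fun hyG => hyH (hGH (mem_erase.2 ⟨hyx, hyG⟩))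
  exact hcard (card_eq_of_mem_facets_of_notMem hind hG hH hy hyG hyH)

lemma exists_facet_card_eq_superset_erase (hK : IsComplex K) {n : ℕ}
    (hbound : ∀ F ∈ K, F.card ≤ n) {F₀ G : Finset V} (hF₀ : F₀ ∈ K) (hF₀card : F₀.card = n)
    (hG : G ∈ K) {x : V} (hxG : x ∈ G) (hxF₀ : x ∉ F₀) :
    ∃ H ∈ facets K, H.card = n ∧ G.erase x ⊆ H := by
  have hGx : G.erase x ∈ inducedSub K ((verts K).erase x) :=
    mem_filter.2 ⟨hK G hG _ (erase_subset x G), erase_subset_erase x (subset_verts hG)⟩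
  obtain ⟨H, hHfac, hGxH⟩ := exists_mem_facets_superset hGx
  have hF₀fac : F₀ ∈ facets (inducedSub K ((verts K).erase x)) :=
    mem_facets_inducedSub (mem_facets_of_card_eq hbound hF₀ hF₀card)
      (subset_verts_erase hF₀ hxF₀)
  have hHcard : H.card = n :=
    (hind _ (erase_ssubset (subset_verts hG hxG)) H hHfac F₀ hF₀fac).trans hF₀card
  have hHK : H ∈ K := (mem_filter.1 (mem_facets.1 hHfac).1).1
  exact ⟨H, mem_facets_of_card_eq hbound hHK hHcard, hHcard, hGxH⟩

end ProperInducedPure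

theorem stmt12_general (d : ℕ) (K : Finset (Finset V)) (hK : IsComplex K)
    (hdim : (∀ F ∈ K, F.card ≤ d + 1) ∧ ∃ F ∈ K, F.card = d + 1)
    (hcard : d + 2 < (verts K).card)
    (hind : ∀ U ⊂ verts K, IsPure (inducedSub K U)) :
    IsPure K := by
  obtain ⟨hbound, F₀, hF₀, hF₀card⟩ := hdim
  suffices h : ∀ G ∈ facets K, G.card = d + 1 by
    intro F hF G hG
    rw [h F hF, h G hG]
  intro G hG
  by_contra hGcard
  have hGK : G ∈ K := (mem_facets.1 hG).1
  obtain ⟨x, hxG, hxF₀⟩ : ∃ x ∈ G, x ∉ F₀ := not_subset.1 fun hGF₀ =>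
    hGcard (((mem_facets.1 hG).2 F₀ hF₀ hGF₀) ▸ hF₀card)
  obtain ⟨H, hH, hHcard, hGH⟩ :=
    exists_facet_card_eq_superset_erase hind hK hbound hF₀ hF₀card hGK hxG hxF₀
  have hverts := verts_subset_insert hind hG hH (hHcard ▸ hGcard) hGH
  have := (card_le_card hverts).trans (card_insert_le x H)
  omega

/-- Every `d`-dimensional obstruction to purity has exactly `d+2` vertices: a `d`-dimensional
complex on more than `d+2` vertices all of whose proper induced subcomplexes are pure
is itself pure. -/
theorem stmt12 (d : ℕ) (hd : 1 ≤ d) (K : Finset (Finset V)) (hK : IsComplex K)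
    (hdim : (∀ F ∈ K, F.card ≤ d + 1) ∧ ∃ F ∈ K, F.card = d + 1)
    (hcard : d + 2 < (verts K).card)
    (hind : ∀ U ⊂ verts K, IsPure (inducedSub K U)) :
    IsPure K :=
  stmt12_general d K hK hdim hcard hind
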